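/- Let a = 1. The function g(η) = e^{−π²σ²(η−ξ₀)²} + e^{−π²σ²(η−ξ₁)²} has exactly one local-maximum point on ℝ, located at η = ξ̄, if and only if Δ ≤ √2/(πσ); and when Δ > √2/(πσ), g has exactly two local-maximum points, symmetric about ξ̄, and a local minimum at ξ̄. -/

import Mathlib

noncomputable section

open MeasureTheory

/-- The balanced-amplitude (a = 1) constructive-time profile: sum of two unit Gaussian bumps. -/
def gSum1 (ξ₀ ξ₁ σ η : ℝ) : ℝ :=
  Real.exp (-(Real.pi ^ 2 * σ ^ 2 * (η - ξ₀) ^ 2)) +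
    Real.exp (-(Real.pi ^ 2 * σ ^ 2 * (η - ξ₁) ^ 2))

/-!
In the variable `u = π²σ²Δ (η - ξ̄)` the profile is the Gaussian pair
`exp (-(u + b)² / 2b) + exp (-(u - b)² / 2b)` with `b = (πσΔ)² / 2`, and its derivative is a
negative multiple of the odd function `F u = u cosh u - b sinh u`. Since
`F' / cosh = 1 - b + u tanh u` increases on `[0, ∞)`, `F u < max (F 0) (F v)` for `0 < u < v`.
For `b ≤ 1` (that is, `F' 0 ≥ 0`) this makes `F` positive on `(0, ∞)`, so `u = 0` is the only
critical point. For `b > 1`, `F` has a positive zero `r` (between `log b` and `b`), is negative on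
`(0, r)` and positive beyond, so the profile increases, decreases, increases and decreases again,
with turning points `-r, 0, r`. Finally, `b ≤ 1` means exactly `Δ ≤ √2 / (πσ)`.
-/

open Real Set Filter

theorem Homeomorph.isLocalMax_comp_iff {X Y β : Type*} [TopologicalSpace X] [TopologicalSpace Y]
    [Preorder β] (e : X ≃ₜ Y) {f : Y → β} {x : X} :
    IsLocalMax (f ∘ e) x ↔ IsLocalMax f (e x) := by
  rw [IsLocalMax, IsMaxFilter, IsLocalMax, IsMaxFilter, ← e.map_nhds_eq, eventually_map]
  rfl

theorem Homeomorph.isLocalMin_comp_iff {X Y β : Type*} [TopologicalSpace X] [TopologicalSpace Y]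
    [Preorder β] (e : X ≃ₜ Y) {f : Y → β} {x : X} :
    IsLocalMin (f ∘ e) x ↔ IsLocalMin f (e x) := by
  rw [IsLocalMin, IsMinFilter, IsLocalMin, IsMinFilter, ← e.map_nhds_eq, eventually_map]
  rfl

theorem not_isLocalMax_of_deriv_pos {f : ℝ → ℝ} {a b : ℝ} (hab : a < b)
    (hf : ContinuousOn f (Icc a b)) (hpos : ∀ x ∈ Ioo a b, 0 < deriv f x) : ¬ IsLocalMax f a := by
  intro hmax
  have hmono : StrictMonoOn f (Icc a b) :=
    strictMonoOn_of_deriv_pos (convex_Icc a b) hf (by rwa [interior_Icc])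
  obtain ⟨y, hya, hy⟩ :=
    ((hmax.filter_mono nhdsWithin_le_nhds).and (Ioo_mem_nhdsGT hab)).exists
  exact (hmono (left_mem_Icc.2 hab.le) (Ioo_subset_Icc_self hy) hy.1).not_ge hya

section SlopeFactor

variable {b : ℝ}

def slopeFactor (b u : ℝ) : ℝ := u * cosh u - b * sinh u

theorem slopeFactor_zero (b : ℝ) : slopeFactor b 0 = 0 := by simp [slopeFactor]

theorem slopeFactor_neg (b u : ℝ) : slopeFactor b (-u) = -slopeFactor b u := by
  simp only [slopeFactor, cosh_neg, sinh_neg]; ring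

theorem hasDerivAt_slopeFactor (b u : ℝ) :
    HasDerivAt (slopeFactor b) ((1 - b) * cosh u + u * sinh u) u := by
  have := ((hasDerivAt_id' u).mul (hasDerivAt_cosh u)).sub ((hasDerivAt_sinh u).const_mul b)
  exact this.congr_deriv (by ring)

theorem continuous_slopeFactor (b : ℝ) : Continuous (slopeFactor b) := by
  unfold slopeFactor; fun_prop

theorem slopeFactor_deriv_pos_of_nonneg {s t : ℝ} (hs : 0 ≤ s) (hst : s < t)
    (h : 0 ≤ (1 - b) * cosh s + s * sinh s) : 0 < (1 - b) * cosh t + t * sinh t := by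
  have ht : 0 < sinh t := sinh_pos_iff.2 (hs.trans_lt hst)
  have hts : 0 ≤ sinh (t - s) := sinh_nonneg_iff.2 (sub_nonneg.2 hst.le)
  rw [sinh_sub] at hts
  have key : cosh s * ((1 - b) * cosh t + t * sinh t)
      = cosh t * ((1 - b) * cosh s + s * sinh s)
        + ((t - s) * sinh t * cosh s + s * (sinh t * cosh s - cosh t * sinh s)) := by ring
  have : 0 < cosh s * ((1 - b) * cosh t + t * sinh t) := by
    rw [key]
    have := mul_pos (mul_pos (sub_pos.2 hst) ht) (cosh_pos s)
    have := mul_nonneg (cosh_pos t).le h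
    have := mul_nonneg hs hts
    linarith
  exact pos_of_mul_pos_right this (cosh_pos s).le

theorem strictMonoOn_slopeFactor {s : ℝ} (hs : 0 ≤ s)
    (h : 0 ≤ (1 - b) * cosh s + s * sinh s) : StrictMonoOn (slopeFactor b) (Ici s) := by
  refine strictMonoOn_of_deriv_pos (convex_Ici s) (continuous_slopeFactor b).continuousOn ?_
  rw [interior_Ici]
  intro t ht
  rw [(hasDerivAt_slopeFactor b t).deriv]
  exact slopeFactor_deriv_pos_of_nonneg hs ht h

theorem slopeFactor_lt_max {u v : ℝ} (hu : 0 < u) (huv : u < v) :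
    slopeFactor b u < max 0 (slopeFactor b v) := by
  by_cases h : ∃ s ∈ Icc 0 u, 0 ≤ (1 - b) * cosh s + s * sinh s
  · obtain ⟨s, hs, hs'⟩ := h
    exact lt_max_of_lt_right <|
      strictMonoOn_slopeFactor hs.1 hs' hs.2 (hs.2.trans huv.le) huv
  · push Not at h
    have hanti : StrictAntiOn (slopeFactor b) (Icc 0 u) := by
      refine strictAntiOn_of_deriv_neg (convex_Icc 0 u)
        (continuous_slopeFactor b).continuousOn ?_
      rw [interior_Icc]
      intro t ht
      rw [(hasDerivAt_slopeFactor b t).deriv]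
      exact h t (Ioo_subset_Icc_self ht)
    refine lt_max_of_lt_left ?_
    simpa [slopeFactor_zero] using
      hanti (left_mem_Icc.2 hu.le) (right_mem_Icc.2 hu.le) hu

theorem slopeFactor_pos_of_le_one (hb : b ≤ 1) {u : ℝ} (hu : 0 < u) : 0 < slopeFactor b u := by
  have := strictMonoOn_slopeFactor (b := b) le_rfl (by simpa using hb) self_mem_Ici hu.le hu
  rwa [slopeFactor_zero] at this

theorem exists_slopeFactor_eq_zero (hb : 1 < b) : ∃ r, 0 < r ∧ slopeFactor b r = 0 := by
  have hb0 : 0 < b := by linarith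
  have hlog : 0 < log b := log_pos hb
  have hlog_lt : log b < b := (log_lt_sub_one_of_pos hb0 hb.ne').trans (sub_lt_self b one_pos)
  have hleft : slopeFactor b (log b) < 0 := by
    have hcosh : cosh (log b) < b := by
      rw [cosh_log hb0]
      have : b⁻¹ < b := (inv_lt_one_of_one_lt₀ hb).trans hb
      linarith
    have hsinh : log b < sinh (log b) := self_lt_sinh_iff.2 hlog
    unfold slopeFactor
    nlinarith [mul_lt_mul_of_pos_left hcosh hlog]
  have hright : 0 < slopeFactor b b := by
    have : slopeFactor b b = b * exp (-b) := by rw [← cosh_sub_sinh]; unfold slopeFactor; ring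
    rw [this]; positivity
  obtain ⟨r, hr, hr0⟩ := intermediate_value_Ioo hlog_lt.le
    (continuous_slopeFactor b).continuousOn ⟨hleft, hright⟩
  exact ⟨r, hlog.trans hr.1, hr0⟩

theorem exists_slopeFactor_sign (hb : 1 < b) : ∃ r, 0 < r ∧
    (∀ u ∈ Ioo 0 r, slopeFactor b u < 0) ∧ ∀ u, r < u → 0 < slopeFactor b u := by
  obtain ⟨r, hr, hr0⟩ := exists_slopeFactor_eq_zero hb
  refine ⟨r, hr, fun u hu => ?_, fun u hu => ?_⟩
  · simpa [hr0] using slopeFactor_lt_max (b := b) hu.1 hu.2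
  · have := slopeFactor_lt_max (b := b) hr hu
    rw [hr0] at this
    exact lt_max_iff.1 this |>.resolve_left (lt_irrefl 0)

end SlopeFactor

section GaussPair

variable {b : ℝ}

def gaussPair (b u : ℝ) : ℝ := exp (-((u + b) ^ 2 / (2 * b))) + exp (-((u - b) ^ 2 / (2 * b)))

theorem hasDerivAt_gaussPair (hb : b ≠ 0) (u : ℝ) :
    HasDerivAt (gaussPair b)
      (-(2 / b * exp (-((u ^ 2 + b ^ 2) / (2 * b))) * slopeFactor b u)) u := by
  have h₁ := ((((hasDerivAt_id' u).add_const b).fun_pow 2).div_const (2 * b)).fun_neg.exp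
  have h₂ := ((((hasDerivAt_id' u).sub_const b).fun_pow 2).div_const (2 * b)).fun_neg.exp
  refine (h₁.add h₂).congr_deriv ?_
  have e₁ : exp (-((u + b) ^ 2 / (2 * b))) = exp (-((u ^ 2 + b ^ 2) / (2 * b))) * exp (-u) := by
    rw [← exp_add]; congr 1; field_simp; ring
  have e₂ : exp (-((u - b) ^ 2 / (2 * b))) = exp (-((u ^ 2 + b ^ 2) / (2 * b))) * exp u := by
    rw [← exp_add]; congr 1; field_simp; ring
  rw [e₁, e₂, slopeFactor, cosh_eq, sinh_eq]
  field_simp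
  ring

theorem deriv_gaussPair_pos_iff (hb : 0 < b) (u : ℝ) :
    0 < deriv (gaussPair b) u ↔ slopeFactor b u < 0 := by
  rw [(hasDerivAt_gaussPair hb.ne' u).deriv, neg_mul_eq_mul_neg,
    mul_pos_iff_of_pos_left (by positivity), neg_pos]

theorem deriv_gaussPair_neg_iff (hb : 0 < b) (u : ℝ) :
    deriv (gaussPair b) u < 0 ↔ 0 < slopeFactor b u := by
  rw [(hasDerivAt_gaussPair hb.ne' u).deriv, neg_lt_zero,
    mul_pos_iff_of_pos_left (by positivity)]

theorem differentiable_gaussPair (b : ℝ) : Differentiable ℝ (gaussPair b) := by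
  unfold gaussPair; fun_prop

theorem isLocalMax_gaussPair_iff_of_le_one (hb0 : 0 < b) (hb : b ≤ 1) {u : ℝ} :
    IsLocalMax (gaussPair b) u ↔ u = 0 := by
  have hd := differentiable_gaussPair b
  have hpos : ∀ u < 0, 0 < deriv (gaussPair b) u := fun u hu => by
    have := slopeFactor_pos_of_le_one hb (neg_pos.2 hu)
    rw [slopeFactor_neg] at this
    exact (deriv_gaussPair_pos_iff hb0 u).2 (by linarith)
  have hneg : ∀ u, 0 < u → deriv (gaussPair b) u < 0 := fun u hu =>
    (deriv_gaussPair_neg_iff hb0 u).2 (slopeFactor_pos_of_le_one hb hu)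
  refine ⟨fun hu => ?_, fun hu => ?_⟩
  · have hcrit := hu.deriv_eq_zero
    rcases lt_trichotomy u 0 with h | h | h
    · exact absurd hcrit (hpos u h).ne'
    · exact h
    · exact absurd hcrit (hneg u h).ne
  · rw [hu]
    exact isLocalMax_of_deriv_Ioo neg_one_lt_zero one_pos hd.continuous.continuousAt
      hd.differentiableOn hd.differentiableOn (fun u hu => (hpos u hu.2).le)
      (fun u hu => (hneg u hu.1).le)

theorem exists_isLocalMax_gaussPair_iff_of_one_lt (hb : 1 < b) : ∃ r, 0 < r ∧
    (∀ u, IsLocalMax (gaussPair b) u ↔ u = -r ∨ u = r) ∧ IsLocalMin (gaussPair b) 0 := by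
  have hb0 : 0 < b := one_pos.trans hb
  have hd := differentiable_gaussPair b
  obtain ⟨r, hr, hinner, houter⟩ := exists_slopeFactor_sign hb
  have h₁ : ∀ u < -r, 0 < deriv (gaussPair b) u := fun u hu => by
    have := houter (-u) (by linarith)
    rw [slopeFactor_neg] at this
    exact (deriv_gaussPair_pos_iff hb0 u).2 (by linarith)
  have h₂ : ∀ u ∈ Ioo (-r) 0, deriv (gaussPair b) u < 0 := fun u hu => by
    have := hinner (-u) ⟨by linarith [hu.2], by linarith [hu.1]⟩
    rw [slopeFactor_neg] at this
    exact (deriv_gaussPair_neg_iff hb0 u).2 (by linarith)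
  have h₃ : ∀ u ∈ Ioo 0 r, 0 < deriv (gaussPair b) u := fun u hu =>
    (deriv_gaussPair_pos_iff hb0 u).2 (hinner u hu)
  have h₄ : ∀ u, r < u → deriv (gaussPair b) u < 0 := fun u hu =>
    (deriv_gaussPair_neg_iff hb0 u).2 (houter u hu)
  have hmax_neg : IsLocalMax (gaussPair b) (-r) :=
    isLocalMax_of_deriv_Ioo (sub_one_lt (-r)) (neg_lt_zero.2 hr) hd.continuous.continuousAt
      hd.differentiableOn hd.differentiableOn (fun u hu => (h₁ u hu.2).le)
      (fun u hu => (h₂ u hu).le)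
  have hmax_pos : IsLocalMax (gaussPair b) r :=
    isLocalMax_of_deriv_Ioo hr (lt_add_one r) hd.continuous.continuousAt hd.differentiableOn
      hd.differentiableOn (fun u hu => (h₃ u hu).le) (fun u hu => (h₄ u hu.1).le)
  have hnot : ¬ IsLocalMax (gaussPair b) 0 :=
    not_isLocalMax_of_deriv_pos hr hd.continuous.continuousOn h₃
  refine ⟨r, hr, fun u => ⟨fun hu => ?_, ?_⟩, ?_⟩
  · have hcrit := hu.deriv_eq_zero
    rcases lt_trichotomy u (-r) with h | h | h
    · exact absurd hcrit (h₁ u h).ne'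
    · exact Or.inl h
    rcases lt_trichotomy u 0 with h' | h' | h'
    · exact absurd hcrit (h₂ u ⟨h, h'⟩).ne
    · exact absurd (h' ▸ hu) hnot
    rcases lt_trichotomy u r with h'' | h'' | h''
    · exact absurd hcrit (h₃ u ⟨h', h''⟩).ne'
    · exact Or.inr h''
    · exact absurd hcrit (h₄ u h'').ne
  · rintro (rfl | rfl)
    exacts [hmax_neg, hmax_pos]
  · exact isLocalMin_of_deriv_Ioo (neg_lt_zero.2 hr) hr hd.continuous.continuousAt
      hd.differentiableOn hd.differentiableOn (fun u hu => (h₂ u hu).le) (fun u hu => (h₃ u hu).le)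

end GaussPair

theorem le_sqrt_two_div_iff {x y : ℝ} (hx : 0 ≤ x) (hy : 0 < y) :
    x ≤ √2 / y ↔ (y * x) ^ 2 / 2 ≤ 1 := by
  rw [le_div_iff₀ hy, le_sqrt (by positivity) zero_le_two, div_le_one two_pos, mul_comm]

theorem gSum1_eq_gaussPair {ξ₀ ξ₁ σ : ℝ} (hξ : ξ₀ ≠ ξ₁) (hσ : σ ≠ 0) (η : ℝ) :
    gSum1 ξ₀ ξ₁ σ η = gaussPair ((π * σ * (ξ₁ - ξ₀)) ^ 2 / 2)
      (π ^ 2 * σ ^ 2 * (ξ₁ - ξ₀) * (η - (ξ₀ + ξ₁) / 2)) := by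
  have hΔ : ξ₁ - ξ₀ ≠ 0 := sub_ne_zero.2 hξ.symm
  have hπ : π ≠ 0 := pi_ne_zero
  unfold gSum1 gaussPair
  congr 2 <;> field_simp <;> ring

theorem isLocalMax_gSum1_iff {ξ₀ ξ₁ σ : ℝ} (hξ : ξ₀ ≠ ξ₁) (hσ : σ ≠ 0) (η : ℝ) :
    IsLocalMax (gSum1 ξ₀ ξ₁ σ) η ↔ IsLocalMax (gaussPair ((π * σ * (ξ₁ - ξ₀)) ^ 2 / 2))
      (π ^ 2 * σ ^ 2 * (ξ₁ - ξ₀) * (η - (ξ₀ + ξ₁) / 2)) := by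
  have hk : π ^ 2 * σ ^ 2 * (ξ₁ - ξ₀) ≠ 0 := by
    have := sub_ne_zero.2 hξ.symm; have := pi_ne_zero; positivity
  let e := (Homeomorph.subRight ((ξ₀ + ξ₁) / 2)).trans (Homeomorph.mulLeft₀ _ hk)
  rw [funext (gSum1_eq_gaussPair hξ hσ)]
  exact e.isLocalMax_comp_iff (f := gaussPair _)

theorem isLocalMin_gSum1_iff {ξ₀ ξ₁ σ : ℝ} (hξ : ξ₀ ≠ ξ₁) (hσ : σ ≠ 0) (η : ℝ) :
    IsLocalMin (gSum1 ξ₀ ξ₁ σ) η ↔ IsLocalMin (gaussPair ((π * σ * (ξ₁ - ξ₀)) ^ 2 / 2))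
      (π ^ 2 * σ ^ 2 * (ξ₁ - ξ₀) * (η - (ξ₀ + ξ₁) / 2)) := by
  have hk : π ^ 2 * σ ^ 2 * (ξ₁ - ξ₀) ≠ 0 := by
    have := sub_ne_zero.2 hξ.symm; have := pi_ne_zero; positivity
  let e := (Homeomorph.subRight ((ξ₀ + ξ₁) / 2)).trans (Homeomorph.mulLeft₀ _ hk)
  rw [funext (gSum1_eq_gaussPair hξ hσ)]
  exact e.isLocalMin_comp_iff (f := gaussPair _)

/-- with `a = 1`, `g` has exactly one local-maximum point, located at `ξ̄`,
iff `Δ ≤ √2/(πσ)`; and when `Δ > √2/(πσ)`, it has exactly two local-maximum points,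
symmetric about `ξ̄`, and a local minimum at `ξ̄`. -/
theorem stmt2 (ξ₀ ξ₁ σ : ℝ) (hξ : ξ₀ < ξ₁) (hσ : 0 < σ) :
    ({η : ℝ | IsLocalMax (gSum1 ξ₀ ξ₁ σ) η} = {(ξ₀ + ξ₁) / 2} ↔
      ξ₁ - ξ₀ ≤ Real.sqrt 2 / (Real.pi * σ)) ∧
    (Real.sqrt 2 / (Real.pi * σ) < ξ₁ - ξ₀ →
      (∃ η₁ η₂ : ℝ, η₁ ≠ η₂ ∧ IsLocalMax (gSum1 ξ₀ ξ₁ σ) η₁ ∧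
          IsLocalMax (gSum1 ξ₀ ξ₁ σ) η₂ ∧ η₁ + η₂ = ξ₀ + ξ₁ ∧
          ∀ η : ℝ, IsLocalMax (gSum1 ξ₀ ξ₁ σ) η → η = η₁ ∨ η = η₂) ∧
      IsLocalMin (gSum1 ξ₀ ξ₁ σ) ((ξ₀ + ξ₁) / 2)) := by
  have hΔ : 0 < ξ₁ - ξ₀ := sub_pos.2 hξ
  set b := (π * σ * (ξ₁ - ξ₀)) ^ 2 / 2
  set k := π ^ 2 * σ ^ 2 * (ξ₁ - ξ₀)
  set m := (ξ₀ + ξ₁) / 2 with hm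
  have hk : 0 < k := by positivity
  have hmax := isLocalMax_gSum1_iff hξ.ne hσ.ne'
  have hcrit : ξ₁ - ξ₀ ≤ √2 / (π * σ) ↔ b ≤ 1 := le_sqrt_two_div_iff hΔ.le (by positivity)
  rcases le_or_gt b 1 with hb1 | hb1
  · have hset : {η | IsLocalMax (gSum1 ξ₀ ξ₁ σ) η} = {m} := Set.ext fun η =>
      (hmax η).trans <| (isLocalMax_gaussPair_iff_of_le_one (by positivity) hb1).trans <| by
        rw [mul_eq_zero, sub_eq_zero, or_iff_right hk.ne']; rfl
    exact ⟨iff_of_true hset (hcrit.2 hb1), fun h => absurd (hcrit.2 hb1) h.not_ge⟩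
  · obtain ⟨r, hr, hmax_iff, hmin⟩ := exists_isLocalMax_gaussPair_iff_of_one_lt hb1
    have hiff (η : ℝ) : IsLocalMax (gSum1 ξ₀ ξ₁ σ) η ↔ η = m - r / k ∨ η = m + r / k := by
      have hsolve (s : ℝ) : k * (η - m) = s ↔ η = m + s / k := by
        rw [← sub_eq_iff_eq_add', eq_div_iff hk.ne', mul_comm]
      rw [hmax, hmax_iff, hsolve, hsolve, neg_div, ← sub_eq_add_neg]
    have hrk : 0 < r / k := div_pos hr hk
    refine ⟨iff_of_false (fun h => ?_) (by rwa [hcrit, not_le]),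
      fun _ => ⟨⟨m - r / k, m + r / k, by linarith, (hiff _).2 (Or.inl rfl),
        (hiff _).2 (Or.inr rfl), by rw [hm]; ring, fun η => (hiff η).1⟩,
        (isLocalMin_gSum1_iff hξ.ne hσ.ne' m).2 (by rwa [sub_self, mul_zero])⟩⟩
    have hm_max : m ∈ {η | IsLocalMax (gSum1 ξ₀ ξ₁ σ) η} := h ▸ mem_singleton m
    rcases (hiff m).1 hm_max with h' | h' <;> linarith
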